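/- arXiv:1407.1478 — 2 statements merged into one kernel-verified Lean document; each statement's English description precedes it below -/
import Mathlib

section
/- If Φ' and Ψ' denote the tensors Φ and Ψ constructed with respect to the complementary subspace E instead of D, then aΠ + bΦ + cΨ = (a+b+c)Π − (b+2c)Φ' + cΨ' for all real a, b, c. Equivalently, Φ + Φ' = Π and Ψ − Ψ' = Φ − Φ' suitably combined yield this identity. -/
/-!
Write `g = h + m` for the splitting of the metric along `V = D ⊕ Dᗮ`. Since `Φ` is linear in
its second form and `Π` is quadratic in the metric, `Φ + Φ' = Π` and `Φ - Φ' = Π_h - Π_m`, where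
`Π_k` is `Π` built from the form `k`. On a 2-dimensional `J`-invariant subspace with unit vector
`e`, the orthonormal basis `(e, J e)` turns `⟪p, r⟫ ⟪q, s⟫ - ⟪p, s⟫ ⟪q, r⟫` into a product of two
`2 × 2` determinants, which equals `⟪J p, q⟫ ⟪J r, s⟫`; hence `Π_h = Ψ` and `Π_m = Ψ'`. The
identity is the combination of `Π = Φ + Φ'` and `Ψ - Ψ' = Φ - Φ'`.
-/

open scoped RealInnerProductSpace
open Module

noncomputable section Tensors

variable {α : Type*} (J : α → α)

-- The paper's `Π`, `Φ`, `Ψ`, with the metric and the form `h` replaced by arbitrary forms.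

def piTensor (k : α → α → ℝ) (X Y Z U : α) : ℝ :=
  (1/4) * (k Y Z * k X U - k X Z * k Y U + k (J Y) Z * k (J X) U - k (J X) Z * k (J Y) U
    - 2 * k (J X) Y * k (J Z) U)

def phiTensor (g k : α → α → ℝ) (X Y Z U : α) : ℝ :=
  (1/8) * (g Y Z * k X U - g X Z * k Y U + g X U * k Y Z - g Y U * k X Z
    + g (J Y) Z * k (J X) U - g (J X) Z * k (J Y) U + g (J X) U * k (J Y) Z - g (J Y) U * k (J X) Z
    - 2 * g (J X) Y * k (J Z) U - 2 * g (J Z) U * k (J X) Y)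

def psiTensor (k : α → α → ℝ) (X Y Z U : α) : ℝ :=
  -(k (J X) Y * k (J Z) U)

variable {g k l : α → α → ℝ}

theorem phiTensor_add_phiTensor (hg : ∀ x y, g x y = k x y + l x y) (X Y Z U : α) :
    phiTensor J g k X Y Z U + phiTensor J g l X Y Z U = piTensor J g X Y Z U := by
  simp only [phiTensor, piTensor, hg]
  ring

theorem phiTensor_sub_phiTensor (hg : ∀ x y, g x y = k x y + l x y) (X Y Z U : α) :
    phiTensor J g k X Y Z U - phiTensor J g l X Y Z U =
      piTensor J k X Y Z U - piTensor J l X Y Z U := by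
  simp only [phiTensor, piTensor, hg]
  ring

theorem piTensor_eq_psiTensor {J : α → α}
    (hk : ∀ X Y Z U, k X Z * k Y U - k X U * k Y Z = k (J X) Y * k (J Z) U)
    (hkJ : ∀ X Y Z U, k (J X) Z * k (J Y) U - k (J X) U * k (J Y) Z = k (J X) Y * k (J Z) U)
    (X Y Z U : α) :
    piTensor J k X Y Z U = psiTensor J k X Y Z U := by
  simp only [piTensor, psiTensor]
  linear_combination (-1/4) * hk X Y Z U - (1/4) * hkJ X Y Z U

end Tensors

section InnerProductSpace

theorem inner_mul_inner_sub_inner_mul_inner_of_finrank_eq_two {W : Type*}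
    [NormedAddCommGroup W] [InnerProductSpace ℝ W] (hW : finrank ℝ W = 2)
    (J : W →ₗ[ℝ] W) (hJ2 : ∀ x, J (J x) = -x) (hJskew : ∀ x y, ⟪J x, y⟫ = -⟪x, J y⟫)
    (p q r s : W) :
    ⟪p, r⟫ * ⟪q, s⟫ - ⟪p, s⟫ * ⟪q, r⟫ = ⟪J p, q⟫ * ⟪J r, s⟫ := by
  have : Nontrivial W := Module.nontrivial_of_finrank_eq_succ hW
  have : FiniteDimensional ℝ W := Module.finite_of_finrank_eq_succ hW
  obtain ⟨e, he⟩ := exists_norm_eq W zero_le_one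
  have hon : Orthonormal ℝ ![e, J e] := by
    have hJe : ⟪e, J e⟫ = 0 := by linarith [hJskew e e, real_inner_comm e (J e)]
    have hnJe : ‖J e‖ = 1 := by
      rw [← he, ← pow_left_inj₀ (norm_nonneg _) (norm_nonneg _) two_ne_zero,
        ← real_inner_self_eq_norm_sq, ← real_inner_self_eq_norm_sq, hJskew, hJ2, inner_neg_right,
        neg_neg]
    simp [he, hnJe, hJe]
  let b := (basisOfOrthonormalOfCardEqFinrank hon (by simp [hW])).toOrthonormalBasis
    (by simpa using hon)
  have parseval : ∀ x y, ⟪x, y⟫ = ⟪x, e⟫ * ⟪y, e⟫ + ⟪x, J e⟫ * ⟪y, J e⟫ := fun x y => by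
    simpa [b, Fin.sum_univ_two, real_inner_comm] using (b.sum_inner_mul_inner x y).symm
  have hJJe : ∀ x, ⟪J x, J e⟫ = ⟪x, e⟫ := fun x => by rw [hJskew, hJ2, inner_neg_right, neg_neg]
  rw [parseval p r, parseval q s, parseval p s, parseval q r, parseval (J p) q, parseval (J r) s,
    hJskew p, hJskew r, hJJe, hJJe]
  ring

variable {V : Type*} [NormedAddCommGroup V] [InnerProductSpace ℝ V] {J : V →ₗ[ℝ] V}

theorem Submodule.orthogonal_mapsTo_of_skew (hJskew : ∀ x y, ⟪J x, y⟫ = -⟪x, J y⟫)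
    {K : Submodule ℝ V} (hKJ : ∀ x ∈ K, J x ∈ K) : ∀ x ∈ Kᗮ, J x ∈ Kᗮ := by
  intro x hx u hu
  rw [← neg_eq_zero, ← hJskew]
  exact hx (J u) (hKJ u hu)

theorem Submodule.orthogonalProjectionOnto_apply_of_skew
    (hJskew : ∀ x y, ⟪J x, y⟫ = -⟪x, J y⟫) (K : Submodule ℝ V) [K.HasOrthogonalProjection]
    (hKJ : ∀ x ∈ K, J x ∈ K) (x : V) :
    K.orthogonalProjectionOnto (J x) = J.restrict hKJ (K.orthogonalProjectionOnto x) := by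
  apply Subtype.ext
  change K.starProjection (J x) = J (K.starProjection x)
  refine K.eq_starProjection_of_mem_of_inner_eq_zero (hKJ _ (K.starProjection_apply_mem x))
    fun w hw => ?_
  rw [← map_sub, hJskew, neg_eq_zero]
  exact K.starProjection_inner_eq_zero x (J w) (hKJ w hw)

theorem Submodule.inner_eq_inner_orthogonalProjectionOnto_add (K : Submodule ℝ V)
    [K.HasOrthogonalProjection] (x y : V) :
    ⟪x, y⟫ = ⟪(K.orthogonalProjectionOnto x : V), (K.orthogonalProjectionOnto y : V)⟫
      + ⟪(Kᗮ.orthogonalProjectionOnto x : V), (Kᗮ.orthogonalProjectionOnto y : V)⟫ := by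
  conv_lhs => rw [← K.starProjection_add_starProjection_orthogonal x,
    ← K.starProjection_add_starProjection_orthogonal y]
  rw [inner_add_left, inner_add_right, inner_add_right,
    K.inner_right_of_mem_orthogonal (K.starProjection_apply_mem x) (Kᗮ.starProjection_apply_mem y),
    K.inner_left_of_mem_orthogonal (K.starProjection_apply_mem y) (Kᗮ.starProjection_apply_mem x),
    add_zero, zero_add]
  rfl

theorem piTensor_eq_psiTensor_of_finrank_eq_two (hJ2 : ∀ x, J (J x) = -x)
    (hJskew : ∀ x y, ⟪J x, y⟫ = -⟪x, J y⟫) (K : Submodule ℝ V) [K.HasOrthogonalProjection]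
    (hK : finrank ℝ K = 2) (hKJ : ∀ x ∈ K, J x ∈ K) {k : V → V → ℝ}
    (hk : ∀ x y, k x y = ⟪(K.orthogonalProjectionOnto x : V), (K.orthogonalProjectionOnto y : V)⟫)
    (X Y Z U : V) : piTensor J k X Y Z U = psiTensor J k X Y Z U := by
  let J' := J.restrict hKJ
  have hJ'2 : ∀ x, J' (J' x) = -x := fun x => Subtype.ext (hJ2 x)
  have hJ'skew : ∀ x y, ⟪J' x, y⟫ = -⟪x, J' y⟫ := fun x y => hJskew x y
  have hdet := inner_mul_inner_sub_inner_mul_inner_of_finrank_eq_two hK J' hJ'2 hJ'skew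
  have hkK : ∀ x y, k x y = ⟪K.orthogonalProjectionOnto x, K.orthogonalProjectionOnto y⟫ :=
    fun x y => hk x y
  have hπJ : ∀ x, K.orthogonalProjectionOnto (J x) = J' (K.orthogonalProjectionOnto x) :=
    K.orthogonalProjectionOnto_apply_of_skew hJskew hKJ
  have hJ'J' : ∀ p q, ⟪J' (J' p), J' q⟫ = ⟪J' p, q⟫ := fun p q => by
    rw [hJ'skew, hJ'2, inner_neg_right, neg_neg]
  refine piTensor_eq_psiTensor (fun x y z u => ?_) (fun x y z u => ?_) X Y Z U
  · simp only [hkK, hπJ]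
    apply hdet
  · simp only [hkK, hπJ]
    rw [← hJ'J' _ (K.orthogonalProjectionOnto y)]
    apply hdet

end InnerProductSpace

theorem stmt10 {V : Type*} [NormedAddCommGroup V] [InnerProductSpace ℝ V] [FiniteDimensional ℝ V] (hV : finrank ℝ V = 4)
    (J : V →ₗ[ℝ] V) (hJ2 : ∀ x, J (J x) = -x)
    (hJskew : ∀ x y, ⟪J x, y⟫ = -⟪x, J y⟫)
    (D : Submodule ℝ V) (hDdim : finrank ℝ D = 2)
    (hDJ : ∀ x ∈ D, J x ∈ D)
    (h : V → V → ℝ)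
    (hh : ∀ x y, h x y = ⟪(Submodule.orthogonalProjection D x : V), (Submodule.orthogonalProjection D y : V)⟫)
    (m : V → V → ℝ)
    (hm : ∀ x y, m x y = ⟪(Submodule.orthogonalProjection Dᗮ x : V), (Submodule.orthogonalProjection Dᗮ y : V)⟫)
    (Pp : V → V → V → V → ℝ)
    (hPp : ∀ X Y Z U, Pp X Y Z U = (1/4) * (⟪Y, Z⟫ * ⟪X, U⟫ - ⟪X, Z⟫ * ⟪Y, U⟫
      + ⟪J Y, Z⟫ * ⟪J X, U⟫ - ⟪J X, Z⟫ * ⟪J Y, U⟫ - 2 * ⟪J X, Y⟫ * ⟪J Z, U⟫))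
    (Ph : V → V → V → V → ℝ)
    (hPh : ∀ X Y Z U, Ph X Y Z U = (1/8) * (⟪Y, Z⟫ * h X U - ⟪X, Z⟫ * h Y U
      + ⟪X, U⟫ * h Y Z - ⟪Y, U⟫ * h X Z
      + ⟪J Y, Z⟫ * h (J X) U - ⟪J X, Z⟫ * h (J Y) U
      + ⟪J X, U⟫ * h (J Y) Z - ⟪J Y, U⟫ * h (J X) Z
      - 2 * ⟪J X, Y⟫ * h (J Z) U - 2 * ⟪J Z, U⟫ * h (J X) Y))
    (Ps : V → V → V → V → ℝ)
    (hPs : ∀ X Y Z U, Ps X Y Z U = -(h (J X) Y * h (J Z) U))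
    (Ph' : V → V → V → V → ℝ)
    (hPh' : ∀ X Y Z U, Ph' X Y Z U = (1/8) * (⟪Y, Z⟫ * m X U - ⟪X, Z⟫ * m Y U
      + ⟪X, U⟫ * m Y Z - ⟪Y, U⟫ * m X Z
      + ⟪J Y, Z⟫ * m (J X) U - ⟪J X, Z⟫ * m (J Y) U
      + ⟪J X, U⟫ * m (J Y) Z - ⟪J Y, U⟫ * m (J X) Z
      - 2 * ⟪J X, Y⟫ * m (J Z) U - 2 * ⟪J Z, U⟫ * m (J X) Y))
    (Ps' : V → V → V → V → ℝ)
    (hPs' : ∀ X Y Z U, Ps' X Y Z U = -(m (J X) Y * m (J Z) U))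
    (a b c : ℝ) :
    ∀ X Y Z U : V,
      a * Pp X Y Z U + b * Ph X Y Z U + c * Ps X Y Z U
        = (a + b + c) * Pp X Y Z U - (b + 2 * c) * Ph' X Y Z U + c * Ps' X Y Z U := by
  intro X Y Z U
  have hg : ∀ x y, ⟪x, y⟫ = h x y + m x y := fun x y => by
    rw [hh, hm]
    exact D.inner_eq_inner_orthogonalProjectionOnto_add x y
  have hDperp : finrank ℝ Dᗮ = 2 := by
    have := D.finrank_add_finrank_orthogonal
    omega
  have hPi : Pp X Y Z U = Ph X Y Z U + Ph' X Y Z U := by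
    rw [hPp, hPh, hPh']
    exact (phiTensor_add_phiTensor J hg X Y Z U).symm
  have hPsi : Ps X Y Z U - Ps' X Y Z U = Ph X Y Z U - Ph' X Y Z U := by
    rw [hPs, hPs', hPh, hPh']
    have hPsiD := piTensor_eq_psiTensor_of_finrank_eq_two hJ2 hJskew D hDdim hDJ hh X Y Z U
    have hPsiDperp := piTensor_eq_psiTensor_of_finrank_eq_two hJ2 hJskew Dᗮ hDperp
      (Submodule.orthogonal_mapsTo_of_skew hJskew hDJ) hm X Y Z U
    have hPhi := phiTensor_sub_phiTensor J hg X Y Z U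
    rw [hPsiD, hPsiDperp] at hPhi
    exact hPhi.symm
  linear_combination (-(b + c)) * hPi + c * hPsi
end

section
/- The tensor K = (1/6)Π − Φ + Ψ has vanishing Ricci contraction: c(K)(X,Y) = Σᵢ K(eᵢ, X, Y, eᵢ) = 0 for every orthonormal basis (eᵢ) of V and all X, Y. -/
/-!
Write `h x y = ⟪x, P y⟫` with `P` the orthogonal projection onto `D`: it is symmetric, idempotent,
commutes with `J` (as `D` and `Dᗮ` are `J`-invariant) and has trace `dim D`. By Parseval, the
contractions over an orthonormal basis of an `n`-dimensional space are
`c(Π) = (n + 2)/4 · g`, `c(Φ) = (tr P · g + (n + 4) h)/8` and `c(Ψ) = h`;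
for `n = 4` and `tr P = 2` the combination `c(Π)/6 - c(Φ) + c(Ψ)` cancels.
-/

open scoped RealInnerProductSpace
open Module

noncomputable section KahlerTensors

variable {V ι : Type*} [NormedAddCommGroup V] [InnerProductSpace ℝ V] [Fintype ι]

def kahlerPi (J : V →ₗ[ℝ] V) (X Y Z U : V) : ℝ :=
  (1/4) * (⟪Y, Z⟫ * ⟪X, U⟫ - ⟪X, Z⟫ * ⟪Y, U⟫
    + ⟪J Y, Z⟫ * ⟪J X, U⟫ - ⟪J X, Z⟫ * ⟪J Y, U⟫ - 2 * ⟪J X, Y⟫ * ⟪J Z, U⟫)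

def kahlerPhi (J : V →ₗ[ℝ] V) (h : V → V → ℝ) (X Y Z U : V) : ℝ :=
  (1/8) * (⟪Y, Z⟫ * h X U - ⟪X, Z⟫ * h Y U
    + ⟪X, U⟫ * h Y Z - ⟪Y, U⟫ * h X Z
    + ⟪J Y, Z⟫ * h (J X) U - ⟪J X, Z⟫ * h (J Y) U
    + ⟪J X, U⟫ * h (J Y) Z - ⟪J Y, U⟫ * h (J X) Z
    - 2 * ⟪J X, Y⟫ * h (J Z) U - 2 * ⟪J Z, U⟫ * h (J X) Y)

def kahlerPsi (J : V →ₗ[ℝ] V) (h : V → V → ℝ) (X Y Z U : V) : ℝ :=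
  -(h (J X) Y * h (J Z) U)

variable {J T : V →ₗ[ℝ] V}

theorem inner_apply_self_eq_zero_of_skew (hJskew : ∀ x y, ⟪J x, y⟫ = -⟪x, J y⟫) (x : V) :
    ⟪J x, x⟫ = 0 := by
  linarith [hJskew x x, real_inner_comm (J x) x]

theorem inner_apply_apply_eq_of_skew (hJ2 : ∀ x, J (J x) = -x)
    (hJskew : ∀ x y, ⟪J x, y⟫ = -⟪x, J y⟫) (x y : V) : ⟪J x, J y⟫ = ⟪x, y⟫ := by
  rw [hJskew, hJ2, inner_neg_right, neg_neg]

theorem inner_apply_apply_self_eq_zero_of_skew (hJskew : ∀ x y, ⟪J x, y⟫ = -⟪x, J y⟫)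
    (hT : T.IsSymmetric) (hTJ : ∀ x, T (J x) = J (T x)) (x : V) : ⟪J x, T x⟫ = 0 := by
  have : ⟪J x, T x⟫ = ⟪x, J (T x)⟫ := by rw [← hTJ, ← hT, real_inner_comm]
  linarith [hJskew x (T x)]

theorem OrthonormalBasis.sum_inner_self (e : OrthonormalBasis ι ℝ V) :
    ∑ i, ⟪e i, e i⟫ = Fintype.card ι := by
  simp [e.orthonormal.1]

theorem sum_kahlerPi (hJ2 : ∀ x, J (J x) = -x) (hJskew : ∀ x y, ⟪J x, y⟫ = -⟪x, J y⟫)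
    (e : OrthonormalBasis ι ℝ V) (X Y : V) :
    ∑ i, kahlerPi J (e i) X Y (e i) = (Fintype.card ι + 2) / 4 * ⟪X, Y⟫ := by
  have pointwise : ∀ w, kahlerPi J w X Y w = (1/4) * (⟪X, Y⟫ * ⟪w, w⟫ - ⟪X, w⟫ * ⟪w, Y⟫
      + ⟪J X, w⟫ * ⟪w, J Y⟫ + 2 * (⟪J Y, w⟫ * ⟪w, J X⟫)) := by
    intro w
    rw [kahlerPi, inner_apply_self_eq_zero_of_skew hJskew, hJskew w Y, hJskew w X]
    ring
  simp only [pointwise, ← Finset.mul_sum, Finset.sum_add_distrib, Finset.sum_sub_distrib,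
    e.sum_inner_mul_inner, e.sum_inner_self, inner_apply_apply_eq_of_skew hJ2 hJskew,
    real_inner_comm Y X]
  ring

theorem sum_kahlerPhi (hJ2 : ∀ x, J (J x) = -x) (hJskew : ∀ x y, ⟪J x, y⟫ = -⟪x, J y⟫)
    (hT : T.IsSymmetric) (hTJ : ∀ x, T (J x) = J (T x)) (e : OrthonormalBasis ι ℝ V) (X Y : V) :
    ∑ i, kahlerPhi J (fun x y ↦ ⟪x, T y⟫) (e i) X Y (e i)
      = (1/8) * (LinearMap.trace ℝ V T * ⟪X, Y⟫ + (Fintype.card ι + 4) * ⟪X, T Y⟫) := by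
  have pointwise : ∀ w, kahlerPhi J (fun x y ↦ ⟪x, T y⟫) w X Y w = (1/8) * (⟪X, Y⟫ * ⟪w, T w⟫
      - ⟪T X, w⟫ * ⟪w, Y⟫ + ⟪X, T Y⟫ * ⟪w, w⟫ - ⟪X, w⟫ * ⟪w, T Y⟫
      + ⟪T (J X), w⟫ * ⟪w, J Y⟫ + ⟪J X, w⟫ * ⟪w, J (T Y)⟫
      + 2 * (⟪T (J Y), w⟫ * ⟪w, J X⟫) + 2 * (⟪J Y, w⟫ * ⟪w, J (T X)⟫)) := by
    intro w
    rw [kahlerPhi, inner_apply_self_eq_zero_of_skew hJskew,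
      inner_apply_apply_self_eq_zero_of_skew hJskew hT hTJ, ← hT X w, ← hT (J X) w, ← hT (J Y) w,
      hJskew w Y, hJskew w X, hJskew w (T Y), hJskew w (T X)]
    ring
  have hTJJ : ∀ x y, ⟪T (J x), J y⟫ = ⟪x, T y⟫ := fun x y ↦ by
    rw [hTJ, inner_apply_apply_eq_of_skew hJ2 hJskew, hT]
  simp only [pointwise, ← Finset.mul_sum, Finset.sum_add_distrib, Finset.sum_sub_distrib,
    e.sum_inner_mul_inner, e.sum_inner_self, ← T.trace_eq_sum_inner, hTJJ,
    inner_apply_apply_eq_of_skew hJ2 hJskew, hT X Y, real_inner_comm X (T Y), ← hT Y X]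
  ring

theorem sum_kahlerPsi (hJ2 : ∀ x, J (J x) = -x) (hJskew : ∀ x y, ⟪J x, y⟫ = -⟪x, J y⟫)
    (hT : T.IsSymmetric) (hTJ : ∀ x, T (J x) = J (T x)) (e : OrthonormalBasis ι ℝ V) (X Y : V) :
    ∑ i, kahlerPsi J (fun x y ↦ ⟪x, T y⟫) (e i) X Y (e i) = ⟪T X, T Y⟫ := by
  have pointwise : ∀ w, kahlerPsi J (fun x y ↦ ⟪x, T y⟫) w X Y w = ⟪T (J Y), w⟫ * ⟪w, J (T X)⟫ := by
    intro w
    rw [kahlerPsi, hJskew w (T X), ← hT (J Y) w]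
    ring
  simp only [pointwise, e.sum_inner_mul_inner, hTJ, inner_apply_apply_eq_of_skew hJ2 hJskew,
    real_inner_comm (T X)]

end KahlerTensors

namespace Submodule

variable {V : Type*} [NormedAddCommGroup V] [InnerProductSpace ℝ V]

theorem starProjection_apply_map_of_skew (D : Submodule ℝ V) [D.HasOrthogonalProjection]
    {J : V →ₗ[ℝ] V} (hJskew : ∀ x y, ⟪J x, y⟫ = -⟪x, J y⟫) (hDJ : ∀ x ∈ D, J x ∈ D) (x : V) :
    D.starProjection (J x) = J (D.starProjection x) := by
  refine eq_starProjection_of_mem_of_inner_eq_zero (hDJ _ (coe_mem _)) fun w hw ↦ ?_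
  have hperp : ⟪x - D.starProjection x, J w⟫ = 0 :=
    (mem_orthogonal' D _).1 (sub_starProjection_mem_orthogonal x) _ (hDJ w hw)
  rw [← map_sub, hJskew, hperp, neg_zero]

theorem trace_starProjection [FiniteDimensional ℝ V] (D : Submodule ℝ V) :
    LinearMap.trace ℝ V D.starProjection = finrank ℝ D :=
  LinearMap.IsProj.trace ⟨fun _ ↦ coe_mem _, fun _ hx ↦ starProjection_eq_self_iff.mpr hx⟩

end Submodule

theorem stmt14_general {V : Type*} [NormedAddCommGroup V] [InnerProductSpace ℝ V] [FiniteDimensional ℝ V]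
    (J : V →ₗ[ℝ] V) (hJ2 : ∀ x, J (J x) = -x)
    (hJskew : ∀ x y, ⟪J x, y⟫ = -⟪x, J y⟫)
    (D : Submodule ℝ V) (hDdim : finrank ℝ D = 2)
    (hDJ : ∀ x ∈ D, J x ∈ D)
    (h : V → V → ℝ)
    (hh : ∀ x y, h x y = ⟪(Submodule.orthogonalProjection D x : V), (Submodule.orthogonalProjection D y : V)⟫)
    (Pp : V → V → V → V → ℝ)
    (hPp : ∀ X Y Z U, Pp X Y Z U = (1/4) * (⟪Y, Z⟫ * ⟪X, U⟫ - ⟪X, Z⟫ * ⟪Y, U⟫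
      + ⟪J Y, Z⟫ * ⟪J X, U⟫ - ⟪J X, Z⟫ * ⟪J Y, U⟫ - 2 * ⟪J X, Y⟫ * ⟪J Z, U⟫))
    (Ph : V → V → V → V → ℝ)
    (hPh : ∀ X Y Z U, Ph X Y Z U = (1/8) * (⟪Y, Z⟫ * h X U - ⟪X, Z⟫ * h Y U
      + ⟪X, U⟫ * h Y Z - ⟪Y, U⟫ * h X Z
      + ⟪J Y, Z⟫ * h (J X) U - ⟪J X, Z⟫ * h (J Y) U
      + ⟪J X, U⟫ * h (J Y) Z - ⟪J Y, U⟫ * h (J X) Z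
      - 2 * ⟪J X, Y⟫ * h (J Z) U - 2 * ⟪J Z, U⟫ * h (J X) Y))
    (Ps : V → V → V → V → ℝ)
    (hPs : ∀ X Y Z U, Ps X Y Z U = -(h (J X) Y * h (J Z) U))
    (K : V → V → V → V → ℝ)
    (hK : ∀ X Y Z U, K X Y Z U = (1/6) * Pp X Y Z U - Ph X Y Z U + Ps X Y Z U) :
    ∀ (e : OrthonormalBasis (Fin 4) ℝ V) (X Y : V),
      ∑ i, K (e i) X Y (e i) = 0 := by
  intro e X Y
  set P : V →ₗ[ℝ] V := D.starProjection.toLinearMap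
  have hP : P.IsSymmetric := D.starProjection_isSymmetric
  have hPJ : ∀ x, P (J x) = J (P x) := D.starProjection_apply_map_of_skew hJskew hDJ
  have hPP : ∀ x y, ⟪P x, P y⟫ = ⟪x, P y⟫ := fun x y ↦ by
    rw [hP, show P (P y) = P y from D.starProjection_eq_self_iff.mpr (D.coe_mem _)]
  have htrace : LinearMap.trace ℝ V P = 2 := by
    rw [show LinearMap.trace ℝ V P = finrank ℝ D from D.trace_starProjection, hDdim]
    norm_num
  have hh' : h = fun x y ↦ ⟪x, P y⟫ := by
    funext x y
    rw [hh, ← hPP]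
    rfl
  have hK' : K = fun X Y Z U ↦ (1/6) * kahlerPi J X Y Z U - kahlerPhi J h X Y Z U
      + kahlerPsi J h X Y Z U := by
    funext X Y Z U
    rw [hK, hPp, hPh, hPs, kahlerPi, kahlerPhi, kahlerPsi]
  simp only [hK', hh', Finset.sum_add_distrib, Finset.sum_sub_distrib, ← Finset.mul_sum,
    sum_kahlerPi hJ2 hJskew, sum_kahlerPhi hJ2 hJskew hP hPJ, sum_kahlerPsi hJ2 hJskew hP hPJ,
    hPP, htrace, Fintype.card_fin]
  ring

theorem stmt14 {V : Type*} [NormedAddCommGroup V] [InnerProductSpace ℝ V] [FiniteDimensional ℝ V] (hV : finrank ℝ V = 4)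
    (J : V →ₗ[ℝ] V) (hJ2 : ∀ x, J (J x) = -x)
    (hJskew : ∀ x y, ⟪J x, y⟫ = -⟪x, J y⟫)
    (D : Submodule ℝ V) (hDdim : finrank ℝ D = 2)
    (hDJ : ∀ x ∈ D, J x ∈ D)
    (h : V → V → ℝ)
    (hh : ∀ x y, h x y = ⟪(Submodule.orthogonalProjection D x : V), (Submodule.orthogonalProjection D y : V)⟫)
    (Pp : V → V → V → V → ℝ)
    (hPp : ∀ X Y Z U, Pp X Y Z U = (1/4) * (⟪Y, Z⟫ * ⟪X, U⟫ - ⟪X, Z⟫ * ⟪Y, U⟫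
      + ⟪J Y, Z⟫ * ⟪J X, U⟫ - ⟪J X, Z⟫ * ⟪J Y, U⟫ - 2 * ⟪J X, Y⟫ * ⟪J Z, U⟫))
    (Ph : V → V → V → V → ℝ)
    (hPh : ∀ X Y Z U, Ph X Y Z U = (1/8) * (⟪Y, Z⟫ * h X U - ⟪X, Z⟫ * h Y U
      + ⟪X, U⟫ * h Y Z - ⟪Y, U⟫ * h X Z
      + ⟪J Y, Z⟫ * h (J X) U - ⟪J X, Z⟫ * h (J Y) U
      + ⟪J X, U⟫ * h (J Y) Z - ⟪J Y, U⟫ * h (J X) Z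
      - 2 * ⟪J X, Y⟫ * h (J Z) U - 2 * ⟪J Z, U⟫ * h (J X) Y))
    (Ps : V → V → V → V → ℝ)
    (hPs : ∀ X Y Z U, Ps X Y Z U = -(h (J X) Y * h (J Z) U))
    (K : V → V → V → V → ℝ)
    (hK : ∀ X Y Z U, K X Y Z U = (1/6) * Pp X Y Z U - Ph X Y Z U + Ps X Y Z U) :
    ∀ (e : OrthonormalBasis (Fin 4) ℝ V) (X Y : V),
      ∑ i, K (e i) X Y (e i) = 0 :=
  stmt14_general J hJ2 hJskew D hDdim hDJ h hh Pp hPp Ph hPh Ps hPs K hK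
end
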